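/- Let R → S be a ring homomorphism of commutative rings and G a finite group acting on S by R-algebra automorphisms such that S is a G-Galois extension of R in the sense that R → S^G is an isomorphism and the map S ⊗_R S → ∏_{g ∈ G} S, x ⊗ y ↦ (x · g(y))_g, is an isomorphism. Then for any commutative R-algebra T, the base change T → T ⊗_R S with the induced G-action is again a G-Galois extension, i.e., T ≅ (T ⊗_R S)^G provided S is faithfully flat over R, and (T ⊗_R S) ⊗_T (T ⊗_R S) ≅ ∏_{g ∈ G} (T ⊗_R S). -/
import Mathlib


open TensorProduct

/-- The Galois map `S ⊗_R S →ₗ (∏_{g ∈ G} S)`, `x ⊗ y ↦ (x · g(y))_g`. -/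
noncomputable def galoisMap (R S G : Type*) [CommRing R] [CommRing S] [Algebra R S]
    [Group G] [MulSemiringAction G S] [SMulCommClass G R S] :
    S ⊗[R] S →ₗ[R] (G → S) :=
  TensorProduct.lift (LinearMap.mk₂ R (fun x y g => x * g • y)
    (by intro m₁ m₂ n; funext g; dsimp only [Pi.add_apply]; rw [add_mul])
    (by intro c m n; funext g; dsimp only [Pi.smul_apply]; rw [smul_mul_assoc])
    (by intro m n₁ n₂; funext g; dsimp only [Pi.add_apply]; rw [smul_add, mul_add])
    (by intro c m n; funext g; dsimp only [Pi.smul_apply]; rw [smul_comm g c, mul_smul_comm]))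

/-- The `G`-action on the base change `T ⊗_R S`, acting on the second factor. -/
noncomputable def baseChangeAction (R S G T : Type*) [CommRing R] [CommRing S] [Algebra R S]
    [Group G] [MulSemiringAction G S] [SMulCommClass G R S] [CommRing T] [Algebra R T]
    (g : G) : T ⊗[R] S →ₐ[R] T ⊗[R] S :=
  Algebra.TensorProduct.map (AlgHom.id R T) (MulSemiringAction.toAlgHom R S g)

/-- The Galois map for the base change: `(T ⊗_R S) ⊗_T (T ⊗_R S) →ₗ (∏_{g ∈ G} T ⊗_R S)`,
`x ⊗ y ↦ (x · g(y))_g`, where `g` acts on `T ⊗_R S` through the second factor. -/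
noncomputable def galoisMapBaseChange (R S G T : Type*) [CommRing R] [CommRing S] [Algebra R S]
    [Group G] [MulSemiringAction G S] [SMulCommClass G R S] [CommRing T] [Algebra R T] :
    (T ⊗[R] S) ⊗[T] (T ⊗[R] S) →ₗ[T] (G → T ⊗[R] S) :=
  TensorProduct.lift (LinearMap.mk₂ T (fun x y g => x * baseChangeAction R S G T g y)
    (by intro m₁ m₂ n; funext g; dsimp only [Pi.add_apply]; rw [add_mul])
    (by intro c m n; funext g; dsimp only [Pi.smul_apply]; rw [smul_mul_assoc])
    (by intro m n₁ n₂; funext g; dsimp only [Pi.add_apply]; rw [map_add, mul_add])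
    (by
      intro c m n
      funext g
      have h : baseChangeAction R S G T g (c • n) = c • baseChangeAction R S G T g n := by
        rw [Algebra.smul_def, Algebra.smul_def, map_mul]
        congr 1
        show baseChangeAction R S G T g (c ⊗ₜ[R] 1) = c ⊗ₜ[R] 1
        simp [baseChangeAction]
      dsimp only [Pi.smul_apply]
      rw [h, mul_smul_comm]))


section Aux

variable (R S G T : Type*) [CommRing R] [CommRing S] [Algebra R S]
    [Group G] [MulSemiringAction G S] [SMulCommClass G R S] [CommRing T] [Algebra R T]

lemma galoisMap_tmul (x y : S) : galoisMap R S G (x ⊗ₜ y) = fun g => x * g • y := rfl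

lemma baseChangeAction_tmul (g : G) (t : T) (s : S) :
    baseChangeAction R S G T g (t ⊗ₜ s) = t ⊗ₜ (g • s) := rfl

lemma baseChangeAction_comp_apply (g h : G) (x : T ⊗[R] S) :
    baseChangeAction R S G T g (baseChangeAction R S G T h x) =
      baseChangeAction R S G T (g * h) x := by
  induction x using TensorProduct.induction_on with
  | zero => simp
  | tmul t s => simp [baseChangeAction, mul_smul]
  | add a b ha hb => simp [ha, hb]

lemma baseChangeAction_one_apply (x : T ⊗[R] S) : baseChangeAction R S G T 1 x = x := by
  induction x using TensorProduct.induction_on with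
  | zero => simp
  | tmul t s => simp [baseChangeAction]
  | add a b ha hb => simp [ha, hb]

variable [Fintype G] [DecidableEq G]

/-- The fundamental equivalence `(T ⊗ S) ⊗ S ≃ (G → T ⊗ S)` coming from the Galois map. -/
noncomputable def auxE (h2 : Function.Bijective (galoisMap R S G)) :
    (T ⊗[R] S) ⊗[R] S ≃ₗ[R] (G → T ⊗[R] S) :=
  (TensorProduct.assoc R T S S) ≪≫ₗ
    TensorProduct.congr (LinearEquiv.refl R T) (LinearEquiv.ofBijective _ h2) ≪≫ₗ
    TensorProduct.piRight R R T (fun _ : G => S)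

lemma auxE_tmul (h2 : Function.Bijective (galoisMap R S G)) (y : T ⊗[R] S) (s : S) :
    auxE R S G T h2 (y ⊗ₜ s) = fun g => y * (1 ⊗ₜ (g • s)) := by
  induction y using TensorProduct.induction_on with
  | zero => rw [zero_tmul, (auxE R S G T h2).map_zero]; funext g; simp
  | tmul t s' =>
    funext g
    simp [auxE, galoisMap_tmul, Algebra.TensorProduct.tmul_mul_tmul]
  | add a b ha hb =>
    funext g
    have : (a + b) ⊗ₜ[R] s = a ⊗ₜ s + b ⊗ₜ s := add_tmul a b s
    rw [this, map_add, ha, hb]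
    simp [add_mul]

/-- The linear map `T → T ⊗ S`. -/
noncomputable def auxF : T →ₗ[R] T ⊗[R] S := (TensorProduct.mk R T S).flip 1

lemma auxF_apply (t : T) : auxF R S T t = t ⊗ₜ 1 := rfl

/-- The difference map `T ⊗ S → (G → T ⊗ S)`, `x ↦ (g x - x)_g`. -/
noncomputable def auxD : T ⊗[R] S →ₗ[R] (G → T ⊗[R] S) :=
  LinearMap.pi fun g => (baseChangeAction R S G T g).toLinearMap - LinearMap.id

lemma auxD_apply (x : T ⊗[R] S) (g : G) :
    auxD R S G T x g = baseChangeAction R S G T g x - x := rfl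

/-- The twisted diagonal `T ⊗ S → (G → T ⊗ S)`, `x ↦ (g x)_g`. -/
noncomputable def auxJ : T ⊗[R] S →ₗ[R] (G → T ⊗[R] S) :=
  LinearMap.pi fun g => (baseChangeAction R S G T g).toLinearMap

lemma auxJ_apply (x : T ⊗[R] S) (g : G) : auxJ R S G T x g = baseChangeAction R S G T g x := rfl

/-- The second map in the Amitsur-type complex. -/
noncomputable def auxDD : (G → T ⊗[R] S) →ₗ[R] (G → G → T ⊗[R] S) :=
  LinearMap.pi fun h => LinearMap.pi fun g =>
    (baseChangeAction R S G T h).toLinearMap ∘ₗ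
      (LinearMap.proj (h⁻¹ * g) : (G → T ⊗[R] S) →ₗ[R] T ⊗[R] S) - LinearMap.proj g

lemma auxDD_apply (F : G → T ⊗[R] S) (h g : G) :
    auxDD R S G T F h g = baseChangeAction R S G T h (F (h⁻¹ * g)) - F g := rfl

lemma auxJ_exact : Function.Exact (auxJ R S G T) (auxDD R S G T) := by
  intro F
  constructor
  · intro hF
    refine ⟨F 1, ?_⟩
    funext g
    have := congrFun (congrFun hF g) g
    simp only [Pi.zero_apply] at this
    rw [auxDD_apply, inv_mul_cancel, sub_eq_zero] at this
    rw [auxJ_apply]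
    exact this
  · rintro ⟨x, rfl⟩
    funext h g
    simp only [auxDD_apply, auxJ_apply, baseChangeAction_comp_apply, Pi.zero_apply]
    rw [mul_inv_cancel_left, sub_self]

lemma auxJ_injective : Function.Injective (auxJ R S G T) := by
  intro x y hxy
  have := congrFun hxy 1
  simpa [auxJ_apply, baseChangeAction_one_apply] using this


/-- The equivalence `(G → T ⊗ S) ⊗ S ≃ (G → G → T ⊗ S)`. -/
noncomputable def auxE3 (h2 : Function.Bijective (galoisMap R S G)) :
    (G → T ⊗[R] S) ⊗[R] S ≃ₗ[R] (G → G → T ⊗[R] S) :=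
  (TensorProduct.comm R (G → T ⊗[R] S) S) ≪≫ₗ
    TensorProduct.piRight R R S (fun _ : G => T ⊗[R] S) ≪≫ₗ
    LinearEquiv.piCongrRight (fun _ : G =>
      (TensorProduct.comm R S (T ⊗[R] S)) ≪≫ₗ auxE R S G T h2)

lemma auxE3_tmul (h2 : Function.Bijective (galoisMap R S G)) (F : G → T ⊗[R] S) (s : S) :
    auxE3 R S G T h2 (F ⊗ₜ s) = fun h g => F h * (1 ⊗ₜ (g • s)) := by
  funext h
  simp only [auxE3, LinearEquiv.trans_apply, TensorProduct.comm_tmul, piRight_apply,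
    piRightHom_tmul, LinearEquiv.piCongrRight_apply]
  exact auxE_tmul R S G T h2 (F h) s

lemma aux_ladder1 (h2 : Function.Bijective (galoisMap R S G)) :
    auxJ R S G T ∘ₗ (LinearEquiv.refl R (T ⊗[R] S) : T ⊗[R] S →ₗ[R] T ⊗[R] S) =
      (auxE R S G T h2 : (T ⊗[R] S) ⊗[R] S →ₗ[R] G → T ⊗[R] S) ∘ₗ
        (auxF R S T).rTensor S := by
  apply TensorProduct.ext'
  intro t s
  simp only [LinearMap.comp_apply, LinearEquiv.coe_coe, LinearEquiv.refl_apply,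
    LinearMap.rTensor_tmul, auxF_apply]
  rw [auxE_tmul]
  funext g
  rw [auxJ_apply, baseChangeAction_tmul, Algebra.TensorProduct.tmul_mul_tmul, mul_one, one_mul]

lemma aux_ladder2 (h2 : Function.Bijective (galoisMap R S G)) :
    auxDD R S G T ∘ₗ (auxE R S G T h2 : (T ⊗[R] S) ⊗[R] S →ₗ[R] G → T ⊗[R] S) =
      (auxE3 R S G T h2 : (G → T ⊗[R] S) ⊗[R] S →ₗ[R] G → G → T ⊗[R] S) ∘ₗ
        (auxD R S G T).rTensor S := by
  apply TensorProduct.ext'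
  intro y s
  simp only [LinearMap.comp_apply, LinearEquiv.coe_coe, LinearMap.rTensor_tmul]
  rw [auxE_tmul, auxE3_tmul]
  funext h g
  rw [auxDD_apply, auxD_apply]
  have key : baseChangeAction R S G T h (y * (1 ⊗ₜ ((h⁻¹ * g) • s))) =
      baseChangeAction R S G T h y * (1 ⊗ₜ (g • s)) := by
    rw [map_mul, baseChangeAction_tmul, smul_smul, mul_inv_cancel_left]
  rw [key, sub_mul]

lemma aux_ladder1' (h2 : Function.Bijective (galoisMap R S G)) (x : T ⊗[R] S) :
    auxE R S G T h2 ((auxF R S T).rTensor S x) = auxJ R S G T x := by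
  have := LinearMap.congr_fun (aux_ladder1 R S G T h2) x
  simpa using this.symm

lemma auxF_rTensor_injective (h2 : Function.Bijective (galoisMap R S G)) :
    Function.Injective ((auxF R S T).rTensor S) := by
  intro a b hab
  apply auxJ_injective R S G T
  rw [← aux_ladder1' R S G T h2 a, ← aux_ladder1' R S G T h2 b, hab]

end Aux

/-- Base change of a `G`-Galois extension of commutative rings: if `R → S` is `G`-Galois
(i.e. `R ≅ S^G` and `S ⊗_R S ≅ ∏_{g ∈ G} S` via `x ⊗ y ↦ (x·g(y))_g`) and `S` is faithfully
flat over `R`, then for any commutative `R`-algebra `T` the base change `T → T ⊗_R S` with the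
induced `G`-action is again `G`-Galois: `T ≅ (T ⊗_R S)^G` and
`(T ⊗_R S) ⊗_T (T ⊗_R S) ≅ ∏_{g ∈ G} (T ⊗_R S)`. -/
theorem stmt19 (R S G : Type*) [CommRing R] [CommRing S] [Algebra R S]
    [Group G] [Finite G] [MulSemiringAction G S] [SMulCommClass G R S]
    (h1a : Function.Injective (algebraMap R S))
    (h1b : Set.range (algebraMap R S) = {s : S | ∀ g : G, g • s = s})
    (h2 : Function.Bijective (galoisMap R S G))
    (hflat : Module.FaithfullyFlat R S)
    (T : Type*) [CommRing T] [Algebra R T] :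
    (Function.Injective (algebraMap T (T ⊗[R] S)) ∧
      Set.range (algebraMap T (T ⊗[R] S)) =
        {x : T ⊗[R] S | ∀ g : G, baseChangeAction R S G T g x = x}) ∧
    Function.Bijective (galoisMapBaseChange R S G T) := by
  haveI := hflat
  haveI := Fintype.ofFinite G
  classical
  -- Part 1: exactness of `T → T ⊗ S → (G → T ⊗ S)` by faithfully flat descent.
  have hex : Function.Exact (auxF R S T) (auxD R S G T) := by
    apply Module.FaithfullyFlat.rTensor_reflects_exact R S
    exact (Function.Exact.iff_of_ladder_linearEquiv
      (e₁ := LinearEquiv.refl R (T ⊗[R] S)) (e₂ := auxE R S G T h2) (e₃ := auxE3 R S G T h2)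
      (aux_ladder1 R S G T h2) (aux_ladder2 R S G T h2)).mp (auxJ_exact R S G T)
  -- Injectivity of `T → T ⊗ S` by faithfully flat descent.
  have hz0 : Function.Exact ((0 : PUnit.{1} →ₗ[R] T).rTensor S) ((auxF R S T).rTensor S) := by
    rw [LinearMap.rTensor_zero]
    intro y
    constructor
    · intro hy
      refine ⟨0, ?_⟩
      have : y = 0 := auxF_rTensor_injective R S G T h2 (by rw [hy, map_zero])
      simp [this]
    · rintro ⟨u, rfl⟩
      simp
  have hexz : Function.Exact (0 : PUnit.{1} →ₗ[R] T) (auxF R S T) :=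
    Module.FaithfullyFlat.rTensor_reflects_exact R S _ _ hz0
  have hinj : Function.Injective (auxF R S T) := by
    intro a b hab
    have h0 : auxF R S T (a - b) = 0 := by rw [map_sub, hab, sub_self]
    obtain ⟨u, hu⟩ := (hexz (a - b)).mp h0
    have : a - b = 0 := by rw [← hu]; simp
    exact sub_eq_zero.mp this
  have hcoe : ⇑(algebraMap T (T ⊗[R] S)) = ⇑(auxF R S T) := by
    funext t
    simp [auxF_apply, Algebra.TensorProduct.algebraMap_apply]
  refine ⟨⟨?_, ?_⟩, ?_⟩
  · rw [hcoe]; exact hinj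
  · rw [hcoe]
    ext x
    simp only [Set.mem_setOf_eq]
    constructor
    · intro hxr g
      have h0 : auxD R S G T x = 0 := (hex x).mpr hxr
      have := congrFun h0 g
      rw [auxD_apply, Pi.zero_apply, sub_eq_zero] at this
      exact this
    · intro hfix
      apply (hex x).mp
      funext g
      rw [Pi.zero_apply, auxD_apply, hfix g, sub_self]
  -- Part 2: the Galois map of the base change.
  · have key : ∀ z : (T ⊗[R] S) ⊗[T] (T ⊗[R] S),
        galoisMapBaseChange R S G T z =
          auxE R S G T h2
            (TensorProduct.AlgebraTensorModule.cancelBaseChange R T T (T ⊗[R] S) S z) := by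
      intro z
      induction z using TensorProduct.induction_on with
      | zero =>
        rw [map_zero, (TensorProduct.AlgebraTensorModule.cancelBaseChange R T T
          (T ⊗[R] S) S).map_zero, (auxE R S G T h2).map_zero]
      | add a b ha hb =>
        rw [map_add, (TensorProduct.AlgebraTensorModule.cancelBaseChange R T T
          (T ⊗[R] S) S).map_add, (auxE R S G T h2).map_add, ha, hb]
      | tmul x y =>
        induction y using TensorProduct.induction_on with
        | zero =>
          rw [tmul_zero, map_zero, (TensorProduct.AlgebraTensorModule.cancelBaseChange R T T
            (T ⊗[R] S) S).map_zero, (auxE R S G T h2).map_zero]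
        | add a b ha hb =>
          rw [tmul_add, map_add, (TensorProduct.AlgebraTensorModule.cancelBaseChange R T T
            (T ⊗[R] S) S).map_add, (auxE R S G T h2).map_add, ha, hb]
        | tmul t s =>
          rw [TensorProduct.AlgebraTensorModule.cancelBaseChange_tmul, auxE_tmul]
          funext g
          show x * baseChangeAction R S G T g (t ⊗ₜ s) = (t • x) * (1 ⊗ₜ (g • s))
          rw [baseChangeAction_tmul, Algebra.smul_def, Algebra.TensorProduct.algebraMap_apply,
            mul_comm _ x, mul_assoc, Algebra.TensorProduct.tmul_mul_tmul, one_mul]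
          norm_num
    have : ⇑(galoisMapBaseChange R S G T) =
        ⇑(auxE R S G T h2) ∘ ⇑(TensorProduct.AlgebraTensorModule.cancelBaseChange R T T (T ⊗[R] S) S) :=
      funext key
    rw [this]
    exact (auxE R S G T h2).bijective.comp
      (TensorProduct.AlgebraTensorModule.cancelBaseChange R T T (T ⊗[R] S) S).bijective
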